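/- arXiv:2205.06178 — 4 statements merged into one kernel-verified Lean document; each statement's English description precedes it below -/
import Mathlib

section
/- Let (t₁, l₁) and (t₂, l₂) be pairs of positive integers with l₁, l₂ odd, gcd(t₁, l₁) = gcd(t₂, l₂) = 1 and (t₁, l₁) ≠ (t₂, l₂). If the two pairs yield the same even leg, 2t₁(l₁ + t₁) = 2t₂(l₂ + t₂), then they yield different odd legs and different hypotenuses: l₁(l₁ + 2t₁) ≠ l₂(l₂ + 2t₂) and (l₁ + t₁)² + t₁² ≠ (l₂ + t₂)² + t₂². Likewise, if they yield the same odd leg, l₁(l₁ + 2t₁) = l₂(l₂ + 2t₂), then 2t₁(l₁ + t₁) ≠ 2t₂(l₂ + t₂) and (l₁ + t₁)² + t₁² ≠ (l₂ + t₂)² + t₂². -/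
/-- Transformation of a gnomon: if two distinct admissible parameter pairs
`(t₁, l₁)` and `(t₂, l₂)` yield the same even leg, then they yield different
odd legs and different hypotenuses; likewise, if they yield the same odd leg,
then they yield different even legs and different hypotenuses. -/
theorem gnomon_transformation_gives_new_triple (t₁ l₁ t₂ l₂ : ℕ)
    (ht₁ : 0 < t₁) (hl₁ : 0 < l₁) (hlodd₁ : Odd l₁) (hgcd₁ : Nat.gcd t₁ l₁ = 1)
    (ht₂ : 0 < t₂) (hl₂ : 0 < l₂) (hlodd₂ : Odd l₂) (hgcd₂ : Nat.gcd t₂ l₂ = 1)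
    (hne : (t₁, l₁) ≠ (t₂, l₂)) :
    (2 * t₁ * (l₁ + t₁) = 2 * t₂ * (l₂ + t₂) →
      l₁ * (l₁ + 2 * t₁) ≠ l₂ * (l₂ + 2 * t₂) ∧
      (l₁ + t₁) ^ 2 + t₁ ^ 2 ≠ (l₂ + t₂) ^ 2 + t₂ ^ 2) ∧
    (l₁ * (l₁ + 2 * t₁) = l₂ * (l₂ + 2 * t₂) →
      2 * t₁ * (l₁ + t₁) ≠ 2 * t₂ * (l₂ + t₂) ∧
      (l₁ + t₁) ^ 2 + t₁ ^ 2 ≠ (l₂ + t₂) ^ 2 + t₂ ^ 2) := by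
  -- identities: h = y + l²  and  h = x + 2t²
  have e1 : (l₁ + t₁) ^ 2 + t₁ ^ 2 = 2 * t₁ * (l₁ + t₁) + l₁ ^ 2 := by ring
  have e2 : (l₂ + t₂) ^ 2 + t₂ ^ 2 = 2 * t₂ * (l₂ + t₂) + l₂ ^ 2 := by ring
  have f1 : (l₁ + t₁) ^ 2 + t₁ ^ 2 = l₁ * (l₁ + 2 * t₁) + 2 * t₁ ^ 2 := by ring
  have f2 : (l₂ + t₂) ^ 2 + t₂ ^ 2 = l₂ * (l₂ + 2 * t₂) + 2 * t₂ ^ 2 := by ring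
  have sqinj : ∀ a b : ℕ, a ^ 2 = b ^ 2 → a = b := fun a b h =>
    Nat.pow_left_injective (by norm_num) h
  -- y = y and h = h imply the pairs are equal
  have keyA : 2 * t₁ * (l₁ + t₁) = 2 * t₂ * (l₂ + t₂) →
      (l₁ + t₁) ^ 2 + t₁ ^ 2 = (l₂ + t₂) ^ 2 + t₂ ^ 2 → False := by
    intro hy hh
    have hl : l₁ = l₂ := sqinj _ _ (by omega)
    subst hl
    have ht : t₁ = t₂ := by
      rcases lt_trichotomy t₁ t₂ with h | h | h
      · have : 2 * t₁ * (l₁ + t₁) < 2 * t₂ * (l₁ + t₂) := by gcongr <;> omega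
        omega
      · exact h
      · have : 2 * t₂ * (l₁ + t₂) < 2 * t₁ * (l₁ + t₁) := by gcongr <;> omega
        omega
    exact hne (by simp [ht])
  -- x = x and h = h imply the pairs are equal
  have keyB : l₁ * (l₁ + 2 * t₁) = l₂ * (l₂ + 2 * t₂) →
      (l₁ + t₁) ^ 2 + t₁ ^ 2 = (l₂ + t₂) ^ 2 + t₂ ^ 2 → False := by
    intro hx hh
    have ht : t₁ = t₂ := sqinj _ _ (by omega)
    subst ht
    have hl : l₁ = l₂ := by
      rcases lt_trichotomy l₁ l₂ with h | h | h
      · have : l₁ * (l₁ + 2 * t₁) < l₂ * (l₂ + 2 * t₁) := by gcongr <;> omega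
        omega
      · exact h
      · have : l₂ * (l₂ + 2 * t₁) < l₁ * (l₁ + 2 * t₁) := by gcongr <;> omega
        omega
    exact hne (by simp [hl])
  -- x = x and y = y imply h = h (Pythagoras), hence the pairs are equal
  have keyC : l₁ * (l₁ + 2 * t₁) = l₂ * (l₂ + 2 * t₂) →
      2 * t₁ * (l₁ + t₁) = 2 * t₂ * (l₂ + t₂) → False := by
    intro hx hy
    have hh : ((l₁ + t₁) ^ 2 + t₁ ^ 2) ^ 2 = ((l₂ + t₂) ^ 2 + t₂ ^ 2) ^ 2 := by
      have p1 : ((l₁ + t₁) ^ 2 + t₁ ^ 2) ^ 2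
          = (l₁ * (l₁ + 2 * t₁)) ^ 2 + (2 * t₁ * (l₁ + t₁)) ^ 2 := by ring
      have p2 : ((l₂ + t₂) ^ 2 + t₂ ^ 2) ^ 2
          = (l₂ * (l₂ + 2 * t₂)) ^ 2 + (2 * t₂ * (l₂ + t₂)) ^ 2 := by ring
      rw [p1, p2, hx, hy]
    exact keyA hy (sqinj _ _ hh)
  exact ⟨fun hy => ⟨fun hx => keyC hx hy, keyA hy⟩,
    fun hx => ⟨fun hy => keyC hx hy, keyB hx⟩⟩
end

section
/- Let (t₁, l₁) and (t₂, l₂) be distinct pairs of positive integers with l₁, l₂ odd, gcd(t₁, l₁) = gcd(t₂, l₂) = 1 and 2t₁l₁ = 2t₂l₂ (the same generating square side S). Then the associated primitive Pythagorean triples share no leg: the even legs differ, 2t₁(l₁ + t₁) ≠ 2t₂(l₂ + t₂); the odd legs differ, l₁(l₁ + 2t₁) ≠ l₂(l₂ + 2t₂); and no even leg of one equals an odd leg of the other. -/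
/-- Distinct admissible parameter pairs with the same generating square side
`S = 2tl` give primitive Pythagorean triples sharing no leg: the even legs
differ, the odd legs differ, and no even leg of one equals an odd leg of the
other. -/
theorem same_block_no_common_leg (t₁ l₁ t₂ l₂ : ℕ)
    (ht₁ : 0 < t₁) (hl₁ : 0 < l₁) (hlodd₁ : Odd l₁) (hgcd₁ : Nat.gcd t₁ l₁ = 1)
    (ht₂ : 0 < t₂) (hl₂ : 0 < l₂) (hlodd₂ : Odd l₂) (hgcd₂ : Nat.gcd t₂ l₂ = 1)
    (hS : 2 * t₁ * l₁ = 2 * t₂ * l₂) (hne : (t₁, l₁) ≠ (t₂, l₂)) :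
    2 * t₁ * (l₁ + t₁) ≠ 2 * t₂ * (l₂ + t₂) ∧
    l₁ * (l₁ + 2 * t₁) ≠ l₂ * (l₂ + 2 * t₂) ∧
    2 * t₁ * (l₁ + t₁) ≠ l₂ * (l₂ + 2 * t₂) ∧
    2 * t₂ * (l₂ + t₂) ≠ l₁ * (l₁ + 2 * t₁) := by
  have hT : t₁ * l₁ = t₂ * l₂ := by
    have h : 2 * (t₁ * l₁) = 2 * (t₂ * l₂) := by
      calc 2 * (t₁ * l₁) = 2 * t₁ * l₁ := by ring
        _ = 2 * t₂ * l₂ := hS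
        _ = 2 * (t₂ * l₂) := by ring
    omega
  have hodd₂ : Odd (l₂ * (l₂ + 2 * t₂)) := hlodd₂.mul (by
    rcases hlodd₂ with ⟨k, hk⟩; exact ⟨k + t₂, by omega⟩)
  have hodd₁ : Odd (l₁ * (l₁ + 2 * t₁)) := hlodd₁.mul (by
    rcases hlodd₁ with ⟨k, hk⟩; exact ⟨k + t₁, by omega⟩)
  refine ⟨?_, ?_, ?_, ?_⟩
  · intro h
    have h' : t₁ * t₁ = t₂ * t₂ := by
      have e1 : 2 * t₁ * (l₁ + t₁) = 2 * (t₁ * l₁) + 2 * (t₁ * t₁) := by ring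
      have e2 : 2 * t₂ * (l₂ + t₂) = 2 * (t₂ * l₂) + 2 * (t₂ * t₂) := by ring
      omega
    have ht : t₁ = t₂ := by nlinarith [Nat.lt_or_ge t₁ t₂]
    have hl : l₁ = l₂ := by
      subst ht
      exact Nat.eq_of_mul_eq_mul_left ht₁ hT
    exact hne (by rw [ht, hl])
  · intro h
    have h' : l₁ * l₁ = l₂ * l₂ := by
      have e1 : l₁ * (l₁ + 2 * t₁) = l₁ * l₁ + 2 * (t₁ * l₁) := by ring
      have e2 : l₂ * (l₂ + 2 * t₂) = l₂ * l₂ + 2 * (t₂ * l₂) := by ring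
      omega
    have hl : l₁ = l₂ := by nlinarith [Nat.lt_or_ge l₁ l₂]
    have ht : t₁ = t₂ := by
      subst hl
      exact Nat.eq_of_mul_eq_mul_right hl₁ hT
    exact hne (by rw [ht, hl])
  · intro h
    rw [← h] at hodd₂
    rcases hodd₂ with ⟨k, hk⟩
    have : 2 * t₁ * (l₁ + t₁) = 2 * (t₁ * (l₁ + t₁)) := by ring
    omega
  · intro h
    rw [← h] at hodd₁
    rcases hodd₁ with ⟨k, hk⟩
    have : 2 * t₂ * (l₂ + t₂) = 2 * (t₂ * (l₂ + t₂)) := by ring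
    omega
end

section
/- Let y be a positive integer divisible by 4 and let n be the number of distinct prime divisors of y. Then the number of primitive Pythagorean triples (x, y, a) having y as the even leg — equivalently, the number of pairs of positive integers (t, l) with l odd, gcd(t, l) = 1 and y = 2t(l + t) — is exactly 2^{n−1}. -/
open Finset

lemma primeFactors_prod_pow {n : ℕ} (hn : n ≠ 0) {S : Finset ℕ} (hS : S ⊆ n.primeFactors) :
    (∏ p ∈ S, p ^ n.factorization p).primeFactors = S := by
  induction S using Finset.induction with
  | empty => simp
  | @insert a s hx ih =>
    have ha : a ∈ n.primeFactors := hS (Finset.mem_insert_self _ _)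
    have hap : a.Prime := Nat.prime_of_mem_primeFactors ha
    have hs : s ⊆ n.primeFactors := fun x h => hS (Finset.mem_insert_of_mem h)
    have hprod : (∏ p ∈ s, p ^ n.factorization p) ≠ 0 := by
      apply Finset.prod_ne_zero_iff.2
      intro p hp
      exact pow_ne_zero _ (Nat.prime_of_mem_primeFactors (hs hp)).ne_zero
    have hexp : n.factorization a ≠ 0 :=
      Finsupp.mem_support_iff.1 (by rwa [Nat.support_factorization])
    rw [Finset.prod_insert hx,
      Nat.primeFactors_mul (pow_ne_zero _ hap.ne_zero) hprod, ih hs,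
      Nat.primeFactors_prime_pow hexp hap, ← Finset.insert_eq]

lemma eq_prod_primeFactors_of_coprime {n d : ℕ} (hn : n ≠ 0) (hd : d ∣ n)
    (hc : Nat.Coprime d (n / d)) :
    d = ∏ p ∈ d.primeFactors, p ^ n.factorization p := by
  have hd0 : d ≠ 0 := fun h => hn (by simpa [h] using hd)
  have hnd0 : n / d ≠ 0 := fun h => hn (by
    rw [← Nat.div_mul_cancel hd, h, zero_mul])
  conv_lhs => rw [← Nat.factorization_prod_pow_eq_self hd0]
  rw [Nat.prod_factorization_eq_prod_primeFactors]
  refine Finset.prod_congr rfl fun p hp => ?_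
  congr 1
  have hpd : p ∣ d := Nat.dvd_of_mem_primeFactors hp
  have hppr : p.Prime := Nat.prime_of_mem_primeFactors hp
  have hnotdvd : ¬ p ∣ (n / d) := fun h =>
    hppr.ne_one (Nat.eq_one_of_dvd_one (hc ▸ Nat.dvd_gcd hpd h))
  have hmul : d * (n / d) = n := Nat.mul_div_cancel' hd
  rw [← hmul, Nat.factorization_mul hd0 hnd0]
  simp [Nat.factorization_eq_zero_of_not_dvd hnotdvd]

lemma card_coprime_divisors {n : ℕ} (hn : n ≠ 0) :
    ((n.divisors).filter (fun d => Nat.Coprime d (n / d))).card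
      = 2 ^ n.primeFactors.card := by
  rw [← Finset.card_powerset]
  apply Finset.card_bij (fun d _ => d.primeFactors)
  · intro d hd
    simp only [Finset.mem_filter, Nat.mem_divisors] at hd
    exact Finset.mem_powerset.2 (Nat.primeFactors_mono hd.1.1 hn)
  · intro d1 h1 d2 h2 h
    simp only [Finset.mem_filter, Nat.mem_divisors] at h1 h2
    rw [eq_prod_primeFactors_of_coprime hn h1.1.1 h1.2,
      eq_prod_primeFactors_of_coprime hn h2.1.1 h2.2, h]
  · intro S hS
    rw [Finset.mem_powerset] at hS
    have hg0 : ∀ T ⊆ n.primeFactors, (∏ p ∈ T, p ^ n.factorization p) ≠ 0 := fun T hT =>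
      Finset.prod_ne_zero_iff.2 fun p hp =>
        pow_ne_zero _ (Nat.prime_of_mem_primeFactors (hT hp)).ne_zero
    have hnn : (∏ p ∈ n.primeFactors, p ^ n.factorization p) = n := by
      conv_rhs => rw [← Nat.factorization_prod_pow_eq_self hn]
      rw [Nat.prod_factorization_eq_prod_primeFactors]
    have hsplit : (∏ p ∈ S, p ^ n.factorization p) *
        (∏ p ∈ n.primeFactors \ S, p ^ n.factorization p) = n := by
      rw [← Finset.prod_union Finset.disjoint_sdiff, Finset.union_sdiff_of_subset hS, hnn]
    have hdvd : (∏ p ∈ S, p ^ n.factorization p) ∣ n := ⟨_, hsplit.symm⟩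
    have hquot : n / (∏ p ∈ S, p ^ n.factorization p)
        = ∏ p ∈ n.primeFactors \ S, p ^ n.factorization p :=
      Nat.div_eq_of_eq_mul_left (Nat.pos_of_ne_zero (hg0 S hS))
        (by rw [mul_comm] at hsplit; exact hsplit.symm)
    refine ⟨∏ p ∈ S, p ^ n.factorization p, ?_, primeFactors_prod_pow hn hS⟩
    simp only [Finset.mem_filter, Nat.mem_divisors]
    refine ⟨⟨hdvd, hn⟩, ?_⟩
    rw [hquot]
    refine (Nat.disjoint_primeFactors (hg0 S hS) (hg0 _ Finset.sdiff_subset)).1 ?_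
    rw [primeFactors_prod_pow hn hS, primeFactors_prod_pow hn Finset.sdiff_subset]
    exact Finset.disjoint_sdiff


lemma card_coprime_divisors_lt {n : ℕ} (hn2 : 2 ∣ n) (hn : n ≠ 0) :
    ((n.divisors).filter (fun d => Nat.Coprime d (n / d) ∧ d < n / d)).card
      = 2 ^ (n.primeFactors.card - 1) := by
  have hne1 : n ≠ 1 := by rintro rfl; omega
  have key : ∀ d, d ∣ n → Nat.Coprime d (n / d) → d ≠ n / d := by
    intro d hdn hc heq
    rw [Nat.Coprime, ← heq, Nat.gcd_self] at hc
    subst hc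
    rw [Nat.div_one] at heq
    exact hne1 heq.symm
  have hsplitcard :
      ((n.divisors).filter (fun d => Nat.Coprime d (n / d) ∧ d < n / d)).card
      + ((n.divisors).filter (fun d => Nat.Coprime d (n / d) ∧ ¬ d < n / d)).card
      = 2 ^ n.primeFactors.card := by
    rw [← card_coprime_divisors hn]
    rw [← Finset.filter_filter, ← Finset.filter_filter]
    exact Finset.card_filter_add_card_filter_not _
  have hbij :
      ((n.divisors).filter (fun d => Nat.Coprime d (n / d) ∧ d < n / d)).card
      = ((n.divisors).filter (fun d => Nat.Coprime d (n / d) ∧ ¬ d < n / d)).card := by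
    apply Finset.card_bij' (fun d _ => n / d) (fun d _ => n / d)
    · intro d hd
      simp only [Finset.mem_filter, Nat.mem_divisors] at hd ⊢
      obtain ⟨⟨hdn, _⟩, hc, hlt⟩ := hd
      have hq : n / (n / d) = d := Nat.div_div_self hdn hn
      refine ⟨⟨Nat.div_dvd_of_dvd hdn, hn⟩, ?_, ?_⟩
      · rw [hq]; exact (Nat.coprime_comm.1 hc)
      · rw [hq]; omega
    · intro d hd
      simp only [Finset.mem_filter, Nat.mem_divisors] at hd ⊢
      obtain ⟨⟨hdn, _⟩, hc, hnlt⟩ := hd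
      have hq : n / (n / d) = d := Nat.div_div_self hdn hn
      have hne := key d hdn hc
      refine ⟨⟨Nat.div_dvd_of_dvd hdn, hn⟩, ?_, ?_⟩
      · rw [hq]; exact (Nat.coprime_comm.1 hc)
      · rw [hq]; omega
    · intro d hd
      simp only [Finset.mem_filter, Nat.mem_divisors] at hd
      exact Nat.div_div_self hd.1.1 hn
    · intro d hd
      simp only [Finset.mem_filter, Nat.mem_divisors] at hd
      exact Nat.div_div_self hd.1.1 hn
  have hcard1 : 1 ≤ n.primeFactors.card := by
    have h2 : 2 ∈ n.primeFactors := Nat.mem_primeFactors.2 ⟨Nat.prime_two, hn2, hn⟩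
    exact Finset.card_pos.2 ⟨2, h2⟩ 
  have hpow : 2 ^ n.primeFactors.card = 2 * 2 ^ (n.primeFactors.card - 1) := by
    conv_lhs => rw [show n.primeFactors.card = (n.primeFactors.card - 1) + 1 by omega]
    rw [pow_succ]; ring
  omega

/-- For a positive integer `y` divisible by `4` with `n` distinct prime
divisors, the number of pairs of positive integers `(t, l)` with `l` odd,
`gcd t l = 1` and `y = 2t(l + t)` — i.e. the number of primitive Pythagorean
triples having `y` as the even leg — is exactly `2^(n-1)`. -/
theorem number_of_triples_with_given_even_leg (y : ℕ) (hy : 0 < y) (h4 : 4 ∣ y) :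
    {p : ℕ × ℕ | 0 < p.1 ∧ 0 < p.2 ∧ Odd p.2 ∧ Nat.gcd p.1 p.2 = 1 ∧
      y = 2 * p.1 * (p.2 + p.1)}.ncard
      = 2 ^ (y.primeFactors.card - 1) := by
  have h2y : 2 ∣ y := dvd_trans (by norm_num) h4
  set m := y / 2 with hmdef
  have hym : y = 2 * m := (Nat.mul_div_cancel' h2y).symm
  have hm2 : 2 ∣ m := by
    obtain ⟨k, rfl⟩ := h4
    exact ⟨k, by omega⟩
  have hm0 : m ≠ 0 := by omega
  set A := (m.divisors).filter (fun d => Nat.Coprime d (m / d) ∧ d < m / d) with hA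
  have hsetEq : {p : ℕ × ℕ | 0 < p.1 ∧ 0 < p.2 ∧ Odd p.2 ∧ Nat.gcd p.1 p.2 = 1 ∧
      y = 2 * p.1 * (p.2 + p.1)}
      = ↑(A.image (fun d => (d, m / d - d))) := by
    ext ⟨t, l⟩
    simp only [Set.mem_setOf_eq, Finset.coe_image, Set.mem_image, Finset.mem_coe,
      hA, Finset.mem_filter, Nat.mem_divisors]
    constructor
    · rintro ⟨ht, hl, hlodd, hgcd, hyeq⟩
      have hmeq : m = t * (l + t) := by
        have h2 : 2 * m = 2 * (t * (l + t)) := by rw [← hym, hyeq]; ring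
        omega
      have hdvd : t ∣ m := ⟨l + t, hmeq⟩
      have hdiv : m / t = l + t := by
        rw [hmeq, Nat.mul_div_cancel_left _ ht]
      refine ⟨t, ⟨⟨hdvd, hm0⟩, ?_, ?_⟩, ?_⟩
      · rw [Nat.Coprime, hdiv, Nat.gcd_add_self_right, hgcd]
      · rw [hdiv]; omega
      · rw [hdiv]
        simp
    · rintro ⟨d, ⟨⟨hdvd, _⟩, hc, hlt⟩, heq⟩
      have hd0 : 0 < d := Nat.pos_of_dvd_of_pos hdvd (by omega)
      have hmul : d * (m / d) = m := Nat.mul_div_cancel' hdvd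
      obtain ⟨rfl, rfl⟩ : d = t ∧ m / d - d = l := by
        simpa [Prod.mk.injEq, eq_comm] using heq
      have hle : d ≤ m / d := le_of_lt hlt
      refine ⟨hd0, by omega, ?_, ?_, ?_⟩
      · -- Odd (m / d - d)
        have hmeven : Even m := (even_iff_two_dvd).2 hm2
        rcases Nat.even_or_odd d with hde | hdo
        · have hqo : Odd (m / d) := by
            rcases Nat.even_or_odd (m / d) with hqe | hqo
            · exfalso
              have h2d : 2 ∣ d := hde.two_dvd
              have h2q : 2 ∣ m / d := hqe.two_dvd
              have : (2 : ℕ) ∣ Nat.gcd d (m / d) := Nat.dvd_gcd h2d h2q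
              rw [hc] at this
              omega
            · exact hqo
          exact Nat.Odd.sub_even hle hqo hde
        · have hqe : Even (m / d) := by
            have : Even (d * (m / d)) := by rw [hmul]; exact hmeven
            rcases Nat.even_mul.1 this with h | h
            · exact absurd h (Nat.not_even_iff_odd.2 hdo)
            · exact h
          exact Nat.Even.sub_odd hle hqe hdo
      · -- gcd d (m/d - d) = 1
        have : m / d - d + d = m / d := Nat.sub_add_cancel hle
        rw [← Nat.gcd_add_self_right d (m / d - d), this]
        exact hc
      · -- y = 2 * d * (m/d - d + d)
        have : m / d - d + d = m / d := Nat.sub_add_cancel hle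
        rw [this, mul_assoc, hmul, ← hym]
  rw [hsetEq, Set.ncard_coe_finset, Finset.card_image_of_injOn
    (fun d1 _ d2 _ h => (Prod.mk.injEq _ _ _ _ ▸ h).1)]
  have hpf : y.primeFactors = m.primeFactors := by
    rw [hym, Nat.primeFactors_mul (by norm_num) hm0, Nat.Prime.primeFactors Nat.prime_two]
    refine Finset.union_eq_right.2 ?_
    intro x hx
    rw [Finset.mem_singleton] at hx
    subst hx
    exact Nat.mem_primeFactors.2 ⟨Nat.prime_two, hm2, hm0⟩
  rw [hpf]
  exact card_coprime_divisors_lt hm2 hm0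
end

section
/- Let x be an odd integer with x > 1 and let n be the number of distinct prime divisors of x. Then the number of primitive Pythagorean triples (x, y, a) having x as the odd leg — equivalently, the number of pairs of positive integers (t, l) with l odd, gcd(t, l) = 1 and x = l(l + 2t) — is exactly 2^{n−1}. -/
/-!
With `m = l + 2t`, the conditions on `(t, l)` say exactly that `x = l * m` with `l < m` and
`gcd(l, m) = 1`; parity comes for free since `x` is odd. So the pairs correspond to the unitary
divisors `l` of `x` (those coprime to their cofactor `x / l`) lying below their cofactor.
A unitary divisor contains the full prime power `p ^ v_p(x)` of each of its primes, so it is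
determined by its set of prime factors, and every subset occurs: there are `2 ^ n` of them.
The involution `d ↦ x / d` has no fixed point when `x > 1`, so exactly half of them lie
below their cofactor.
-/

open Finset

theorem Finset.two_mul_card_filter_lt_of_leftInvOn {α : Type*} [LinearOrder α]
    {s : Finset α} {σ : α → α} (hσ : Set.MapsTo σ s s) (hinv : Set.LeftInvOn σ σ s)
    (hne : ∀ a ∈ s, σ a ≠ a) :
    2 * #{a ∈ s | a < σ a} = #s := by
  have hswap : #{a ∈ s | ¬a < σ a} = #{a ∈ s | a < σ a} := by
    refine card_nbij' σ σ ?_ ?_ (fun _ ha => hinv (mem_filter.mp ha).1)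
      (fun _ ha => hinv (mem_filter.mp ha).1) <;>
    · intro a ha
      simp only [coe_filter, Set.mem_ofPred_eq] at ha ⊢
      refine ⟨hσ ha.1, ?_⟩
      rw [hinv ha.1]
      have := hne a ha.1
      grind
  rw [← card_filter_add_card_filter_not (s := s) (fun a => a < σ a), hswap, two_mul]

namespace Nat

def unitaryDivisors (n : ℕ) : Finset ℕ := {d ∈ n.divisors | Coprime d (n / d)}

variable {n d : ℕ}

theorem mem_unitaryDivisors :
    d ∈ n.unitaryDivisors ↔ (d ∣ n ∧ n ≠ 0) ∧ Coprime d (n / d) := by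
  rw [unitaryDivisors, mem_filter, mem_divisors]

theorem div_mem_unitaryDivisors (hd : d ∈ n.unitaryDivisors) : n / d ∈ n.unitaryDivisors := by
  obtain ⟨⟨hdn, hn⟩, hcop⟩ := mem_unitaryDivisors.mp hd
  exact mem_unitaryDivisors.mpr
    ⟨⟨div_dvd_of_dvd hdn, hn⟩, by rw [Nat.div_div_self hdn hn]; exact hcop.symm⟩

theorem div_ne_self_of_mem_unitaryDivisors (hn : n ≠ 1) (hd : d ∈ n.unitaryDivisors) :
    n / d ≠ d := by
  intro h
  obtain ⟨⟨hdn, -⟩, hcop⟩ := mem_unitaryDivisors.mp hd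
  rw [h, coprime_self] at hcop
  subst hcop
  exact hn (by simpa using h)

theorem factorization_eq_of_mem_unitaryDivisors (hd : d ∈ n.unitaryDivisors) {p : ℕ}
    (hp : p ∈ d.primeFactors) : d.factorization p = n.factorization p := by
  obtain ⟨⟨hdn, -⟩, hcop⟩ := mem_unitaryDivisors.mp hd
  conv_rhs => rw [← Nat.mul_div_cancel' hdn]
  exact (factorization_eq_of_coprime_left hcop
    (mem_primeFactors_iff_mem_primeFactorsList.mp hp)).symm

theorem primeFactors_injOn_unitaryDivisors :
    Set.InjOn primeFactors (n.unitaryDivisors : Set ℕ) := by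
  intro d hd e he hde
  have ne_zero {d} (hd : d ∈ n.unitaryDivisors) : d ≠ 0 := by
    obtain ⟨⟨hdn, hn⟩, -⟩ := mem_unitaryDivisors.mp hd
    exact ne_zero_of_dvd_ne_zero hn hdn
  refine eq_of_factorization_eq (ne_zero hd) (ne_zero he) fun p => ?_
  by_cases hp : p ∈ d.primeFactors
  · rw [factorization_eq_of_mem_unitaryDivisors hd hp,
      factorization_eq_of_mem_unitaryDivisors he (hde ▸ hp)]
  · have hp' : p ∉ e.primeFactors := hde ▸ hp
    rw [← support_factorization, Finsupp.notMem_support_iff] at hp hp'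
    rw [hp, hp']

theorem primeFactors_prod_pow_factorization_filter (n : ℕ) (P : ℕ → Prop) [DecidablePred P] :
    ((n.factorization.filter P).prod (· ^ ·)).primeFactors = {p ∈ n.primeFactors | P p} := by
  rw [← support_factorization, prod_pow_factorization_eq_self, Finsupp.support_filter,
    support_factorization]
  intro p hp
  exact prime_of_mem_primeFactors (mem_filter.mp hp).1

theorem exists_mem_unitaryDivisors_primeFactors_eq (hn : n ≠ 0) {S : Finset ℕ}
    (hS : S ⊆ n.primeFactors) : ∃ d ∈ n.unitaryDivisors, d.primeFactors = S := by
  classical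
  set d := (n.factorization.filter (· ∈ S)).prod (· ^ ·)
  set e := (n.factorization.filter (· ∉ S)).prod (· ^ ·)
  have hde : d * e = n := by
    rw [Finsupp.prod_filter_mul_prod_filter_not, prod_factorization_pow_eq_self hn]
  have hd : d.primeFactors = S := by
    rw [primeFactors_prod_pow_factorization_filter, filter_mem_eq_inter, inter_eq_right.mpr hS]
  have hd0 : d ≠ 0 := left_ne_zero_of_mul (hde ▸ hn)
  have hcop : Coprime d e := by
    rw [← disjoint_primeFactors hd0 (right_ne_zero_of_mul (hde ▸ hn)), hd,
      primeFactors_prod_pow_factorization_filter]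
    exact disjoint_left.mpr fun _ hpS hp => (mem_filter.mp hp).2 hpS
  refine ⟨d, mem_unitaryDivisors.mpr ⟨⟨Dvd.intro e hde, hn⟩, ?_⟩, hd⟩
  rwa [← hde, Nat.mul_div_cancel_left _ (pos_of_ne_zero hd0)]

theorem card_unitaryDivisors (hn : n ≠ 0) : #n.unitaryDivisors = 2 ^ #n.primeFactors := by
  rw [← card_powerset]
  refine card_nbij primeFactors (fun d hd => ?_) primeFactors_injOn_unitaryDivisors
    fun S hS => ?_
  · obtain ⟨⟨hdn, -⟩, -⟩ := mem_unitaryDivisors.mp hd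
    exact mem_powerset.mpr (primeFactors_mono hdn hn)
  · obtain ⟨d, hd, rfl⟩ := exists_mem_unitaryDivisors_primeFactors_eq hn (mem_powerset.mp hS)
    exact ⟨d, hd, rfl⟩

theorem two_mul_card_filter_lt_div_unitaryDivisors (hn : n ≠ 1) :
    2 * #{d ∈ n.unitaryDivisors | d < n / d} = #n.unitaryDivisors :=
  two_mul_card_filter_lt_of_leftInvOn (fun _ hd => div_mem_unitaryDivisors hd)
    (fun _ hd => Nat.div_div_self (mem_unitaryDivisors.mp hd).1.1 (mem_unitaryDivisors.mp hd).1.2)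
    fun _ hd => div_ne_self_of_mem_unitaryDivisors hn hd

theorem coprime_self_add_two_mul_iff {l t : ℕ} (hl : Odd l) :
    Coprime l (l + 2 * t) ↔ Coprime l t := by
  rw [coprime_self_add_right, coprime_mul_iff_right, coprime_two_right]
  exact and_iff_right hl

theorem exists_eq_mul_self_add_two_mul_iff {x l : ℕ} (hx : Odd x) :
    (∃ t, 0 < t ∧ Odd l ∧ Coprime t l ∧ x = l * (l + 2 * t)) ↔
      l ∈ x.unitaryDivisors ∧ l < x / l := by
  constructor
  · rintro ⟨t, ht, hl, hcop, rfl⟩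
    rw [mem_unitaryDivisors, Nat.mul_div_cancel_left _ hl.pos, coprime_self_add_two_mul_iff hl]
    exact ⟨⟨⟨dvd_mul_right _ _, (mul_pos hl.pos (by omega)).ne'⟩, hcop.symm⟩, by omega⟩
  · rintro ⟨hl, hlt⟩
    obtain ⟨⟨hlx, -⟩, hcop⟩ := mem_unitaryDivisors.mp hl
    have hx' : x = l * (x / l) := (Nat.mul_div_cancel' hlx).symm
    have hodd : Odd (l * (x / l)) := hx' ▸ hx
    obtain ⟨a, ha⟩ := Odd.of_mul_left hodd
    obtain ⟨b, hb⟩ := Odd.of_mul_right hodd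
    have hxl : x / l = l + 2 * (b - a) := by omega
    rw [hxl, coprime_self_add_two_mul_iff ⟨a, ha⟩] at hcop
    exact ⟨b - a, by omega, ⟨a, ha⟩, hcop.symm, hxl ▸ hx'⟩

end Nat

/-- For an odd integer `x > 1` with `n` distinct prime divisors, the number of
pairs of positive integers `(t, l)` with `l` odd, `gcd t l = 1` and
`x = l(l + 2t)` — i.e. the number of primitive Pythagorean triples having `x`
as the odd leg — is exactly `2^(n-1)`. -/
theorem number_of_triples_with_given_odd_leg (x : ℕ) (hx : 1 < x) (hxodd : Odd x) :
    {p : ℕ × ℕ | 0 < p.1 ∧ 0 < p.2 ∧ Odd p.2 ∧ Nat.gcd p.1 p.2 = 1 ∧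
      x = p.2 * (p.2 + 2 * p.1)}.ncard
      = 2 ^ (x.primeFactors.card - 1) := by
  set P := {p : ℕ × ℕ | 0 < p.1 ∧ 0 < p.2 ∧ Odd p.2 ∧ Nat.gcd p.1 p.2 = 1 ∧
      x = p.2 * (p.2 + 2 * p.1)}
  have hinj : Set.InjOn Prod.snd P := by
    rintro ⟨t, l⟩ ⟨-, hl, -, -, hxl⟩ ⟨t', l'⟩ ⟨-, -, -, -, hxl'⟩ (rfl : l = l')
    have : l + 2 * t = l + 2 * t' := Nat.eq_of_mul_eq_mul_left hl (hxl.symm.trans hxl')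
    rw [Prod.mk.injEq]
    omega
  have himage : Prod.snd '' P = {l ∈ x.unitaryDivisors | l < x / l} := by
    ext l
    rw [coe_filter, Set.mem_ofPred_eq, ← Nat.exists_eq_mul_self_add_two_mul_iff hxodd]
    constructor
    · rintro ⟨⟨t, l⟩, ⟨ht, -, hl, hcop, hxl⟩, rfl⟩
      exact ⟨t, ht, hl, hcop, hxl⟩
    · rintro ⟨t, ht, hl, hcop, hxl⟩
      exact ⟨(t, l), ⟨ht, hl.pos, hl, hcop, hxl⟩, rfl⟩
  have hω : #x.primeFactors ≠ 0 := (card_pos.mpr (Nat.nonempty_primeFactors.mpr hx)).ne'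
  have hhalf := Nat.two_mul_card_filter_lt_div_unitaryDivisors (n := x) (by omega)
  rw [Nat.card_unitaryDivisors (by omega), ← Nat.sub_one_add_one hω, pow_succ] at hhalf
  rw [← hinj.ncard_image, himage, Set.ncard_coe_finset]
  omega
end
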